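/- For density matrices ρ and σ on a finite-dimensional Hilbert space, and the measurement effect M₊ given by the projector onto the positive eigenspace of ρ − σ, the success probability (1/2)[tr(ρM₊) + tr(σ(I − M₊))] equals 1/2 + (1/4)‖ρ − σ‖₁, and this is the maximum over all effects 0 ≤ M ≤ I of (1/2)[tr(ρM) + tr(σ(I − M))]. -/

import Mathlib

open Matrix ComplexOrder

/-! Diagonalise `Δ = ρ - σ = U diag(λ) Uᴴ`. Since `tr σ = 1`, the success probability of an effect
`M` is `1/2 + tr(Δ M)/2`, and `tr(Δ M) = ∑ λᵢ (Uᴴ M U)ᵢᵢ` where the diagonal entries lie in `[0, 1]`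
when `0 ≤ M ≤ 1`. Hence `tr(Δ M) ≤ ∑ λᵢ⁺`, with equality for the projector onto the positive
eigenspace. Finally `‖Δ‖₁ = tr √(Δ²) = ∑ |λᵢ|`, and `tr Δ = 0` turns `∑ λᵢ⁺` into `‖Δ‖₁ / 2`. -/

/-- Trace norm of a complex matrix: `‖A‖₁ = tr √(Aᴴ A)`. -/
noncomputable def traceNorm {d : ℕ} (A : Matrix (Fin d) (Fin d) ℂ) : ℝ :=
  (((Matrix.posSemidef_conjTranspose_mul_self A).1.eigenvectorUnitary : Matrix (Fin d) (Fin d) ℂ) *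
    Matrix.diagonal (((↑) : ℝ → ℂ) ∘ Real.sqrt ∘ (Matrix.posSemidef_conjTranspose_mul_self A).1.eigenvalues) *
    (star (Matrix.posSemidef_conjTranspose_mul_self A).1.eigenvectorUnitary :
      Matrix (Fin d) (Fin d) ℂ)).trace.re

lemma Finset.sum_posPart_eq_half_sum_abs {ι : Type*} (s : Finset ι) (f : ι → ℝ)
    (hf : ∑ i ∈ s, f i = 0) : ∑ i ∈ s, (f i)⁺ = (∑ i ∈ s, |f i|) / 2 := by
  have hsub : ∑ i ∈ s, (f i)⁺ - ∑ i ∈ s, (f i)⁻ = 0 := by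
    rw [← Finset.sum_sub_distrib, ← hf]; simp only [posPart_sub_negPart]
  have hadd : ∑ i ∈ s, (f i)⁺ + ∑ i ∈ s, (f i)⁻ = ∑ i ∈ s, |f i| := by
    rw [← Finset.sum_add_distrib]; simp only [posPart_add_negPart]
  linarith

lemma mul_le_posPart_of_mem_Icc {a c : ℝ} (hc : c ∈ Set.Icc 0 1) : a * c ≤ a⁺ := by
  rcases le_or_gt a 0 with ha | ha
  · exact (mul_nonpos_of_nonpos_of_nonneg ha hc.1).trans (posPart_nonneg a)
  · rw [posPart_eq_self.2 ha.le]; exact mul_le_of_le_one_right ha.le hc.2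

lemma mul_ite_pos_eq_posPart (a : ℝ) : a * (if 0 < a then 1 else 0) = a⁺ := by
  rw [posPart_eq_ite_lt]; split_ifs <;> simp

namespace Matrix

lemma trace_mul_add_trace_mul_one_sub {n R : Type*} [Fintype n] [DecidableEq n] [CommRing R]
    {ρ σ : Matrix n n R} (hσ : σ.trace = 1) (M : Matrix n n R) :
    (ρ * M).trace + (σ * (1 - M)).trace = 1 + ((ρ - σ) * M).trace := by
  rw [Matrix.mul_sub, Matrix.mul_one, trace_sub, hσ, Matrix.sub_mul, trace_sub]
  ring

variable {n 𝕜 : Type*} [Fintype n] [DecidableEq n] [RCLike 𝕜] {A : Matrix n n 𝕜}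

lemma IsHermitian.trace_cfc (hA : A.IsHermitian) (f : ℝ → ℝ) :
    (cfc f A).trace = ∑ i, (f (hA.eigenvalues i) : 𝕜) := by
  rw [hA.cfc_eq, IsHermitian.cfc, Unitary.conjStarAlgAut_apply, trace_mul_cycle,
    Unitary.coe_star_mul_self, one_mul, trace_diagonal]
  rfl

lemma IsHermitian.trace_mul_eq_sum_eigenvalues_mul (hA : A.IsHermitian) (B : Matrix n n 𝕜) :
    (A * B).trace = ∑ i, (hA.eigenvalues i : 𝕜) *
      (star (hA.eigenvectorUnitary : Matrix n n 𝕜) * B * hA.eigenvectorUnitary) i i := by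
  set U := (hA.eigenvectorUnitary : Matrix n n 𝕜)
  conv_lhs => rw [hA.spectral_theorem]
  calc (U * diagonal (RCLike.ofReal ∘ hA.eigenvalues) * star U * B).trace
      = (diagonal (RCLike.ofReal ∘ hA.eigenvalues) * (star U * B * U)).trace := by
        rw [mul_assoc, mul_assoc, trace_mul_comm]; simp only [mul_assoc]
    _ = _ := by simp [trace, diagonal_mul]

omit [Fintype n] in
lemma PosSemidef.re_diag_mem_Icc {M : Matrix n n 𝕜} (hM : M.PosSemidef) (hM1 : (1 - M).PosSemidef)
    (i : n) : RCLike.re (M i i) ∈ Set.Icc 0 1 := by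
  have h0 := RCLike.nonneg_iff.1 (hM.diag_nonneg (i := i))
  have h1 := (RCLike.nonneg_iff.1 (hM1.diag_nonneg (i := i))).1
  rw [sub_apply, one_apply_eq, map_sub, RCLike.one_re, sub_nonneg] at h1
  exact ⟨h0.1, h1⟩

lemma PosSemidef.one_sub_star_mul_mul_unitary {M : Matrix n n 𝕜} (hM1 : (1 - M).PosSemidef)
    (U : unitary (Matrix n n 𝕜)) : (1 - star (U : Matrix n n 𝕜) * M * U).PosSemidef := by
  have := hM1.conjTranspose_mul_mul_same (U : Matrix n n 𝕜)
  rwa [Matrix.mul_sub, Matrix.sub_mul, Matrix.mul_one, ← star_eq_conjTranspose,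
    Unitary.coe_star_mul_self] at this

lemma IsHermitian.re_trace_mul_le_sum_posPart (hA : A.IsHermitian) {M : Matrix n n 𝕜}
    (hM : M.PosSemidef) (hM1 : (1 - M).PosSemidef) :
    RCLike.re (A * M).trace ≤ ∑ i, (hA.eigenvalues i)⁺ := by
  set U := hA.eigenvectorUnitary
  have hMU : (star (U : Matrix n n 𝕜) * M * U).PosSemidef := by
    simpa [star_eq_conjTranspose] using hM.conjTranspose_mul_mul_same (U : Matrix n n 𝕜)
  rw [hA.trace_mul_eq_sum_eigenvalues_mul, map_sum]
  refine Finset.sum_le_sum fun i _ => ?_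
  rw [RCLike.re_ofReal_mul]
  exact mul_le_posPart_of_mem_Icc (hMU.re_diag_mem_Icc (hM1.one_sub_star_mul_mul_unitary U) i)

lemma IsHermitian.trace_mul_positiveProjector (hA : A.IsHermitian) :
    (A * ((hA.eigenvectorUnitary : Matrix n n 𝕜) *
      diagonal (fun i => if 0 < hA.eigenvalues i then (1 : 𝕜) else 0) *
      (hA.eigenvectorUnitary : Matrix n n 𝕜)ᴴ)).trace
      = ∑ i, (((hA.eigenvalues i)⁺ : ℝ) : 𝕜) := by
  set U := (hA.eigenvectorUnitary : Matrix n n 𝕜)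
  set P := diagonal (fun i => if 0 < hA.eigenvalues i then (1 : 𝕜) else 0)
  have hUPU : star U * (U * P * Uᴴ) * U = P := by
    rw [← star_eq_conjTranspose, show star U * (U * P * star U) * U = star U * U * P * (star U * U)
      by simp only [mul_assoc], Unitary.coe_star_mul_self, one_mul, mul_one]
  rw [hA.trace_mul_eq_sum_eigenvalues_mul, hUPU]
  refine Finset.sum_congr rfl fun i _ => ?_
  rw [show P i i = _ from diagonal_apply_eq _ i, ← mul_ite_pos_eq_posPart]
  split_ifs <;> simp

end Matrix

lemma traceNorm_eq_sum_abs_eigenvalues {d : ℕ} {A : Matrix (Fin d) (Fin d) ℂ} (hA : A.IsHermitian) :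
    traceNorm A = ∑ i, |hA.eigenvalues i| := by
  have hsqrt : traceNorm A = (cfc Real.sqrt (Aᴴ * A)).trace.re := by
    rw [(posSemidef_conjTranspose_mul_self A).1.cfc_eq]; rfl
  have habs : cfc Real.sqrt (Aᴴ * A) = cfc (fun x : ℝ => |x|) A := by
    rw [hA.eq, ← sq, ← cfc_comp_pow (R := ℝ) Real.sqrt 2 A]
    simp only [Real.sqrt_sq_eq_abs]
  rw [hsqrt, habs, hA.trace_cfc]
  simp

theorem helstrom_bound_general {d : ℕ} (ρ σ : Matrix (Fin d) (Fin d) ℂ)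
    (hρ1 : ρ.trace = 1)
    (hσ1 : σ.trace = 1)
    (h : (ρ - σ).IsHermitian)
    (Mp : Matrix (Fin d) (Fin d) ℂ)
    (hMp : Mp = (h.eigenvectorUnitary : Matrix (Fin d) (Fin d) ℂ) *
      Matrix.diagonal (fun i => if 0 < h.eigenvalues i then (1:ℂ) else 0) *
      (h.eigenvectorUnitary : Matrix (Fin d) (Fin d) ℂ)ᴴ) :
    (1/2 : ℂ) * ((ρ * Mp).trace + (σ * (1 - Mp)).trace)
        = ((1/2 + 1/4 * traceNorm (ρ - σ) : ℝ) : ℂ) ∧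
    ∀ M : Matrix (Fin d) (Fin d) ℂ, M.PosSemidef → (1 - M).PosSemidef →
      ((1/2 : ℂ) * ((ρ * M).trace + (σ * (1 - M)).trace)).re
        ≤ 1/2 + 1/4 * traceNorm (ρ - σ) := by
  have hsum : ∑ i, h.eigenvalues i = 0 := by
    have := h.trace_eq_sum_eigenvalues
    rw [trace_sub, hρ1, hσ1, sub_self, RCLike.ofReal_eq_complex_ofReal] at this
    exact_mod_cast this.symm
  have hnorm : traceNorm (ρ - σ) = 2 * ∑ i, (h.eigenvalues i)⁺ := by
    rw [traceNorm_eq_sum_abs_eigenvalues h, Finset.sum_posPart_eq_half_sum_abs _ _ hsum]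
    ring
  refine ⟨?_, fun M hM hM1 => ?_⟩
  · rw [trace_mul_add_trace_mul_one_sub hσ1, hMp, h.trace_mul_positiveProjector, hnorm,
      RCLike.ofReal_eq_complex_ofReal]
    push_cast
    ring
  · have hle : (((ρ - σ) * M).trace).re ≤ ∑ i, (h.eigenvalues i)⁺ :=
      h.re_trace_mul_le_sum_posPart hM hM1
    rw [trace_mul_add_trace_mul_one_sub hσ1, hnorm]
    have hre : ((1/2 : ℂ) * (1 + ((ρ - σ) * M).trace)).re
        = 1/2 + 1/2 * (((ρ - σ) * M).trace).re := by
      simp [Complex.mul_re]; ring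
    linarith

/-- Helstrom bound: the projector onto the positive eigenspace of `ρ − σ` achieves
success probability `1/2 + ‖ρ − σ‖₁/4` in discriminating two equiprobable states,
and this is optimal among all effects `0 ≤ M ≤ 1`. -/
theorem helstrom_bound {d : ℕ} (ρ σ : Matrix (Fin d) (Fin d) ℂ)
    (hρ : ρ.PosSemidef) (hρ1 : ρ.trace = 1)
    (hσ : σ.PosSemidef) (hσ1 : σ.trace = 1)
    (h : (ρ - σ).IsHermitian)
    (Mp : Matrix (Fin d) (Fin d) ℂ)
    (hMp : Mp = (h.eigenvectorUnitary : Matrix (Fin d) (Fin d) ℂ) *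
      Matrix.diagonal (fun i => if 0 < h.eigenvalues i then (1:ℂ) else 0) *
      (h.eigenvectorUnitary : Matrix (Fin d) (Fin d) ℂ)ᴴ) :
    (1/2 : ℂ) * ((ρ * Mp).trace + (σ * (1 - Mp)).trace)
        = ((1/2 + 1/4 * traceNorm (ρ - σ) : ℝ) : ℂ) ∧
    ∀ M : Matrix (Fin d) (Fin d) ℂ, M.PosSemidef → (1 - M).PosSemidef →
      ((1/2 : ℂ) * ((ρ * M).trace + (σ * (1 - M)).trace)).re
        ≤ 1/2 + 1/4 * traceNorm (ρ - σ) :=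
  helstrom_bound_general ρ σ hρ1 hσ1 h Mp hMp
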